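/- arXiv:2403.18200 — 3 statements merged into one kernel-verified Lean document; each statement's English description precedes it below -/
import Mathlib

section
/- Let Ã ∈ ℝ^{n×n}, B̃ ∈ ℝ^{n×q}, C̃ ∈ ℝ^{q×n}. If Ã + (1−λ)·B̃C̃ is Schur stable for every λ ∈ ℂ with |λ| < 1, then every eigenvalue of Ã has modulus ≤ 1. In particular, if Ã has the block upper-triangular form Ã = [[A, B·F_c],[0, A_c]], then every eigenvalue of A and every eigenvalue of A_c has modulus ≤ 1. -/
open Matrix Polynomial

/-- A complex square matrix is Schur stable if every element of its spectrum
has modulus strictly less than one. -/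
def IsSchurStable {m : Type*} [Fintype m] [DecidableEq m] (M : Matrix m m ℂ) : Prop :=
  ∀ μ ∈ spectrum ℂ M, ‖μ‖ < 1

lemma charpoly_eval {m : Type*} [Fintype m] [DecidableEq m] (M : Matrix m m ℂ) (μ : ℂ) :
    M.charpoly.eval μ = (μ • (1 : Matrix m m ℂ) - M).det := by
  rw [Matrix.charpoly, eval_det, matPolyEquiv_charmatrix]
  simp [smul_one_eq_diagonal]

lemma mem_spectrum_iff_det {m : Type*} [Fintype m] [DecidableEq m] (M : Matrix m m ℂ) (μ : ℂ) :
    μ ∈ spectrum ℂ M ↔ (μ • (1 : Matrix m m ℂ) - M).det = 0 := by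
  rw [spectrum.mem_iff, Algebra.algebraMap_eq_smul_one, Matrix.isUnit_iff_isUnit_det,
    isUnit_iff_ne_zero, not_ne_iff]

lemma pow_card_le_abs_prod (s : Multiset ℂ) (c : ℝ) (hc : 0 ≤ c)
    (h : ∀ r ∈ s, c ≤ ‖r‖) : c ^ Multiset.card s ≤ ‖s.prod‖ := by
  induction s using Multiset.induction with
  | empty => simp
  | cons a s ih =>
    rw [Multiset.prod_cons, Multiset.card_cons, norm_mul, pow_succ, mul_comm (c ^ _) c]
    exact mul_le_mul (h a (Multiset.mem_cons_self a s))
      (ih fun r hr => h r (Multiset.mem_cons_of_mem hr)) (pow_nonneg hc _) (norm_nonneg _)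

lemma key {m : Type*} [Fintype m] [DecidableEq m] (Atil BC : Matrix m m ℝ)
    (hstab : ∀ l : ℂ, ‖l‖ < 1 →
      IsSchurStable (Atil.map Complex.ofReal + (1 - l) • BC.map Complex.ofReal)) :
    ∀ μ ∈ spectrum ℂ (Atil.map Complex.ofReal), ‖μ‖ ≤ 1 := by
  intro μ hμ
  by_contra hgt
  push_neg at hgt
  set A' := Atil.map (Complex.ofReal) with hA'
  set E := BC.map (Complex.ofReal) with hE
  set N := Fintype.card m with hN
  set c : ℝ := (‖μ‖ - 1) ^ N with hc
  have hcpos : 0 < c := pow_pos (by linarith) _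
  set g : ℂ → ℂ := fun l => (μ • (1 : Matrix m m ℂ) - (A' + (1 - l) • E)).det with hg
  have hcont : Continuous g := by
    apply Continuous.matrix_det
    exact continuous_const.sub (continuous_const.add
      ((continuous_const.sub continuous_id).smul continuous_const))
  have hbound : ∀ l : ℂ, ‖l‖ < 1 → c ≤ ‖g l‖ := by
    intro l hl
    set M := A' + (1 - l) • E with hM
    have hmon := Matrix.charpoly_monic M
    have hsplit : M.charpoly.Splits := IsAlgClosed.splits _
    have hcard : Multiset.card M.charpoly.roots = N := by
      rw [splits_iff_card_roots.mp hsplit, Matrix.charpoly_natDegree_eq_dim]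
    have hgl : g l = M.charpoly.eval μ := (charpoly_eval M μ).symm
    rw [hgl, hsplit.eq_prod_roots_of_monic hmon, eval_multiset_prod,
      Multiset.map_map]
    have : c = (‖μ‖ - 1) ^ Multiset.card (M.charpoly.roots.map
        (Polynomial.eval μ ∘ fun a => X - C a)) := by
      rw [Multiset.card_map, hcard]
    rw [this]
    apply pow_card_le_abs_prod _ _ (by linarith)
    intro r hr
    obtain ⟨a, ha, rfl⟩ := Multiset.mem_map.mp hr
    have haroot : M.charpoly.IsRoot a := Polynomial.isRoot_of_mem_roots ha
    have haspec : a ∈ spectrum ℂ M := by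
      rw [mem_spectrum_iff_det, ← charpoly_eval]
      exact haroot
    have halt : ‖a‖ < 1 := hstab l hl a haspec
    simp only [Function.comp_apply, Polynomial.eval_sub, Polynomial.eval_X, Polynomial.eval_C]
    calc ‖μ‖ - 1 ≤ ‖μ‖ - ‖a‖ := by linarith
    _ ≤ ‖μ - a‖ := by
        simpa using norm_sub_norm_le μ a
  have hseqR : Filter.Tendsto (fun k : ℕ => (1 - 1/(k+1) : ℝ)) Filter.atTop (nhds 1) := by
    simpa using Filter.Tendsto.const_sub (1 : ℝ) tendsto_one_div_add_atTop_nhds_zero_nat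
  have hseq : Filter.Tendsto (fun k : ℕ => ((1 - 1/(k+1) : ℝ) : ℂ)) Filter.atTop (nhds 1) := by
    have h := (Complex.continuous_ofReal.tendsto 1).comp hseqR
    rw [Complex.ofReal_one] at h
    exact h
  have hg1 : g 1 = 0 := by
    have h0 := (mem_spectrum_iff_det A' μ).mp hμ
    simp [hg, h0]
  have htend : Filter.Tendsto (fun k : ℕ => ‖g ((1 - 1/(k+1) : ℝ) : ℂ)‖)
      Filter.atTop (nhds 0) := by
    have h1 := (hcont.tendsto 1).comp hseq
    rw [hg1] at h1
    have := (continuous_norm.tendsto 0).comp h1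
    simpa [Function.comp_def] using this
  have habs : ∀ k : ℕ, ‖((1 - 1/(k+1) : ℝ) : ℂ)‖ < 1 := by
    intro k
    rw [Complex.norm_real, Real.norm_eq_abs, abs_of_nonneg]
    · have : (0:ℝ) < 1/(k+1) := by positivity
      linarith
    · have : (1:ℝ)/(k+1) ≤ 1 := by
        rw [div_le_one (by positivity)]
        linarith [Nat.cast_nonneg (α := ℝ) k]
      linarith
  have hle : c ≤ 0 :=
    ge_of_tendsto htend (Filter.Eventually.of_forall fun k => hbound _ (habs k))
  linarith

theorem stmt5
    (n nc mdim q : ℕ)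
    (Atil : Matrix (Fin n ⊕ Fin nc) (Fin n ⊕ Fin nc) ℝ)
    (Btil : Matrix (Fin n ⊕ Fin nc) (Fin q) ℝ)
    (Ctil : Matrix (Fin q) (Fin n ⊕ Fin nc) ℝ)
    (A : Matrix (Fin n) (Fin n) ℝ)
    (B : Matrix (Fin n) (Fin mdim) ℝ)
    (Fc : Matrix (Fin mdim) (Fin nc) ℝ)
    (Ac : Matrix (Fin nc) (Fin nc) ℝ)
    (hstab : ∀ l : ℂ, ‖l‖ < 1 →
      IsSchurStable (Atil.map Complex.ofReal + (1 - l) • (Btil * Ctil).map Complex.ofReal)) :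
    -- every eigenvalue of Ã has modulus ≤ 1
    (∀ μ ∈ spectrum ℂ (Atil.map Complex.ofReal), ‖μ‖ ≤ 1) ∧
    -- in particular, for the block upper-triangular form Ã = [[A, B·F_c],[0, A_c]]
    (Atil = Matrix.fromBlocks A (B * Fc) 0 Ac →
      (∀ μ ∈ spectrum ℂ (A.map Complex.ofReal), ‖μ‖ ≤ 1) ∧
      (∀ μ ∈ spectrum ℂ (Ac.map Complex.ofReal), ‖μ‖ ≤ 1)) := by
  have h1 := key Atil (Btil * Ctil) hstab
  refine ⟨h1, fun hblk => ?_⟩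
  have hmap : Atil.map Complex.ofReal =
      Matrix.fromBlocks (A.map Complex.ofReal) ((B * Fc).map Complex.ofReal) 0
        (Ac.map Complex.ofReal) := by
    rw [hblk, Matrix.fromBlocks_map, Matrix.map_zero _ Complex.ofReal_zero]
  have hdet : ∀ μ : ℂ,
      (μ • (1 : Matrix (Fin n ⊕ Fin nc) (Fin n ⊕ Fin nc) ℂ) - Atil.map Complex.ofReal).det =
      (μ • (1 : Matrix (Fin n) (Fin n) ℂ) - A.map Complex.ofReal).det *
      (μ • (1 : Matrix (Fin nc) (Fin nc) ℂ) - Ac.map Complex.ofReal).det := by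
    intro μ
    have hblock : μ • (1 : Matrix (Fin n ⊕ Fin nc) (Fin n ⊕ Fin nc) ℂ) - Atil.map Complex.ofReal
        = Matrix.fromBlocks (μ • 1 - A.map Complex.ofReal) (-(B * Fc).map Complex.ofReal) 0
          (μ • 1 - Ac.map Complex.ofReal) := by
      rw [hmap]
      ext i j
      rcases i with i | i <;> rcases j with j | j <;>
        simp [Matrix.fromBlocks, Matrix.one_apply, Matrix.smul_apply, apply_ite]
    rw [hblock, Matrix.det_fromBlocks_zero₂₁]
  constructor
  · intro μ hμ
    apply h1 μ
    rw [mem_spectrum_iff_det] at hμ ⊢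
    rw [hdet, hμ, zero_mul]
  · intro μ hμ
    apply h1 μ
    rw [mem_spectrum_iff_det] at hμ ⊢
    rw [hdet, hμ, mul_zero]
end

section
/- Let A, K ∈ ℝ^{n×n} and let M ∈ ℝ^{N×N} be such that every eigenvalue of M has positive real part. If A + λ·K is Hurwitz for every λ ∈ ℂ with Re λ > 0, then the matrix I_N ⊗ A + M ⊗ K is Hurwitz. -/
open Matrix
open scoped Kronecker

lemma mem_spectrum_iff_exists_eigvec {m : Type*} [Fintype m] [DecidableEq m]
    (T : Matrix m m ℂ) (μ : ℂ) :
    μ ∈ spectrum ℂ T ↔ ∃ v, v ≠ 0 ∧ T *ᵥ v = μ • v := by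
  rw [spectrum.mem_iff, Matrix.isUnit_iff_isUnit_det, isUnit_iff_ne_zero, not_not,
    ← Matrix.exists_mulVec_eq_zero_iff]
  have halg : (algebraMap ℂ (Matrix m m ℂ) μ) = μ • (1 : Matrix m m ℂ) :=
    Algebra.algebraMap_eq_smul_one μ
  constructor
  · rintro ⟨v, hv, h⟩
    refine ⟨v, hv, ?_⟩
    rw [Matrix.sub_mulVec, halg, Matrix.smul_mulVec, Matrix.one_mulVec,
      sub_eq_zero] at h
    exact h.symm
  · rintro ⟨v, hv, h⟩
    refine ⟨v, hv, ?_⟩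
    rw [Matrix.sub_mulVec, halg, Matrix.smul_mulVec, Matrix.one_mulVec, h, sub_self]

lemma mem_spectrum_of_transpose {m : Type*} [Fintype m] [DecidableEq m]
    {P : Matrix m m ℂ} {lam : ℂ} (h : lam ∈ spectrum ℂ Pᵀ) : lam ∈ spectrum ℂ P := by
  rw [spectrum.mem_iff, Matrix.isUnit_iff_isUnit_det] at h ⊢
  have : (algebraMap ℂ (Matrix m m ℂ) lam - Pᵀ).det
      = (algebraMap ℂ (Matrix m m ℂ) lam - P).det := by
    rw [← Matrix.det_transpose (algebraMap ℂ (Matrix m m ℂ) lam - P), Matrix.transpose_sub]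
    congr 1
    simp [Algebra.algebraMap_eq_smul_one]
  rwa [this] at h

lemma key_select {E F : Type*} [AddCommGroup E] [Module ℂ E] [AddCommGroup F] [Module ℂ F]
    (f : Module.End ℂ E) (g : E →ₗ[ℂ] F) (lam : ℂ) :
    ∀ (k : ℕ) (x : E), ((f - lam • 1) ^ k) x = 0 → g x ≠ 0 →
      ∃ y, g y ≠ 0 ∧ g (f y) = lam • g y := by
  intro k
  induction k with
  | zero =>
    intro x hx hgx
    simp only [pow_zero, Module.End.one_apply] at hx
    exact absurd (by simp [hx]) hgx
  | succ k ih =>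
    intro x hx hgx
    by_cases h0 : g ((f - lam • 1) x) = 0
    · refine ⟨x, hgx, ?_⟩
      have hfx : f x = lam • x + (f - lam • 1) x := by
        simp [LinearMap.sub_apply]
      rw [hfx, map_add, LinearMap.map_smul, h0, add_zero]
    · refine ih ((f - lam • 1) x) ?_ h0
      rw [← Module.End.mul_apply, ← pow_succ]
      exact hx

/-- A complex square matrix is Hurwitz if every element of its spectrum has
negative real part. -/
def IsHurwitz {m : Type*} [Fintype m] [DecidableEq m] (M : Matrix m m ℂ) : Prop :=
  ∀ μ ∈ spectrum ℂ M, μ.re < 0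

theorem stmt7
    (n N : ℕ)
    (A K : Matrix (Fin n) (Fin n) ℝ)
    (M : Matrix (Fin N) (Fin N) ℝ)
    (hM : ∀ μ ∈ spectrum ℂ (M.map Complex.ofReal), 0 < μ.re)
    (hstab : ∀ l : ℂ, 0 < l.re →
      IsHurwitz (A.map Complex.ofReal + l • K.map Complex.ofReal)) :
    IsHurwitz ((((1 : Matrix (Fin N) (Fin N) ℝ) ⊗ₖ A + M ⊗ₖ K)).map Complex.ofReal) := by
  set A' := A.map Complex.ofReal with hA'
  set K' := K.map Complex.ofReal with hK'
  set M' := M.map Complex.ofReal with hM'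
  intro μ hμ
  have hT : (((1 : Matrix (Fin N) (Fin N) ℝ) ⊗ₖ A + M ⊗ₖ K)).map Complex.ofReal
      = (1 : Matrix (Fin N) (Fin N) ℂ) ⊗ₖ A' + M' ⊗ₖ K' := by
    ext ⟨i, j⟩ ⟨k, l⟩
    simp [A', K', M', Matrix.kroneckerMap_apply, Matrix.one_apply, apply_ite Complex.ofReal]
  rw [hT, mem_spectrum_iff_exists_eigvec] at hμ
  obtain ⟨v, hv0, hvT⟩ := hμ
  set W : Matrix (Fin n) (Fin N) ℂ := Matrix.of fun (j : Fin n) (i : Fin N) => v (i, j) with hW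
  -- master matrix identity
  have hmaster : A' * W + K' * W * M'ᵀ = μ • W := by
    ext j i
    have h := congrFun hvT (i, j)
    simp only [Matrix.mulVec, dotProduct, Matrix.add_apply, Matrix.kroneckerMap_apply,
      Matrix.one_apply, Fintype.sum_prod_type, add_mul, ite_mul, one_mul, zero_mul,
      Finset.sum_add_distrib, Pi.smul_apply, smul_eq_mul] at h
    simp only [Matrix.add_apply, Matrix.mul_apply, Matrix.smul_apply, Matrix.of_apply,
      Matrix.transpose_apply, smul_eq_mul, hW]
    rw [← h]
    congr 1
    · rw [Finset.sum_comm]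
      simp [Finset.sum_ite_eq, mul_comm]
    · rw [Finset.sum_comm]
      simp [Finset.mul_sum, Finset.sum_mul, mul_comm, mul_assoc, mul_left_comm]
      exact Finset.sum_comm
  -- vectorized identity
  have hkey : ∀ y : Fin N → ℂ,
      A' *ᵥ (W *ᵥ y) + K' *ᵥ (W *ᵥ (M'ᵀ *ᵥ y)) = μ • (W *ᵥ y) := by
    intro y
    have := congrArg (fun (P : Matrix (Fin n) (Fin N) ℂ) => P *ᵥ y) hmaster
    simpa [Matrix.add_mulVec, Matrix.smul_mulVec, ← Matrix.mulVec_mulVec] using this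
  set f : Module.End ℂ (Fin N → ℂ) := M'ᵀ.mulVecLin with hf
  set g : (Fin N → ℂ) →ₗ[ℂ] (Fin n → ℂ) := W.mulVecLin with hg
  -- g ≠ 0
  have hgx : ∃ x : Fin N → ℂ, g x ≠ 0 := by
    have : ∃ p : Fin N × Fin n, v p ≠ 0 := by
      by_contra h
      push_neg at h
      exact hv0 (funext h)
    obtain ⟨⟨i, j⟩, hp⟩ := this
    refine ⟨Pi.single i 1, fun hc => hp ?_⟩
    have := congrFun hc j
    simpa [hg, hW, Matrix.mulVecLin_apply] using this
  obtain ⟨x₀, hx₀⟩ := hgx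
  -- find generalized eigenvector not killed by g
  have hsel : ∃ (lam : ℂ) (x : Fin N → ℂ), x ∈ f.maxGenEigenspace lam ∧ g x ≠ 0 := by
    by_contra h
    push_neg at h
    have hle : ∀ lam : ℂ, f.maxGenEigenspace lam ≤ LinearMap.ker g := by
      intro lam x hx
      exact LinearMap.mem_ker.mpr (h lam x hx)
    have htop : (⊤ : Submodule ℂ (Fin N → ℂ)) ≤ LinearMap.ker g := by
      rw [← Module.End.iSup_maxGenEigenspace_eq_top f]
      exact iSup_le hle
    exact hx₀ (htop (Submodule.mem_top))
  obtain ⟨lam, x, hxmem, hgx0⟩ := hsel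
  -- lam is an eigenvalue of f, hence in spectrum of M'
  have hlamspec : lam ∈ spectrum ℂ M' := by
    obtain ⟨k, hk⟩ := (Module.End.mem_maxGenEigenspace f lam x).mp hxmem
    have hx0 : x ≠ 0 := fun hc => hgx0 (by simp [hc])
    have hgen : f.HasGenEigenvalue lam k := by
      have : x ∈ f.genEigenspace lam k := by
        rw [Module.End.genEigenspace_nat, LinearMap.mem_ker]
        exact hk
      exact Module.End.hasGenEigenvalue_iff.mpr
        ((Submodule.ne_bot_iff _).mpr ⟨x, this, hx0⟩)
    have hev : f.HasEigenvalue lam := Module.End.hasEigenvalue_of_hasGenEigenvalue hgen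
    obtain ⟨z, hz⟩ := hev.exists_hasEigenvector
    have hz1 : M'ᵀ *ᵥ z = lam • z := by
      have := hz.apply_eq_smul
      simpa only [hf, Matrix.mulVecLin_apply] using this
    exact mem_spectrum_of_transpose
      ((mem_spectrum_iff_exists_eigvec M'ᵀ lam).mpr ⟨z, hz.right, hz1⟩)
  -- select y with g y ≠ 0 and g (f y) = lam • g y
  obtain ⟨k, hk⟩ := (Module.End.mem_maxGenEigenspace f lam x).mp hxmem
  obtain ⟨y, hy1, hy2⟩ := key_select f g lam k x hk hgx0
  -- conclude
  have hlamre : 0 < lam.re := hM lam hlamspec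
  have hu : (A' + lam • K') *ᵥ (g y) = μ • (g y) := by
    have h1 := hkey y
    have h2 : W *ᵥ (M'ᵀ *ᵥ y) = lam • (W *ᵥ y) := by
      simpa only [hf, hg, Matrix.mulVecLin_apply] using hy2
    rw [h2] at h1
    rw [Matrix.add_mulVec, Matrix.smul_mulVec]
    simpa [hg, Matrix.mulVecLin_apply, Matrix.mulVec_smul] using h1
  have hμspec : μ ∈ spectrum ℂ (A' + lam • K') :=
    (mem_spectrum_iff_exists_eigvec _ μ).mpr ⟨g y, hy1, hu⟩
  exact hstab lam hlamre μ hμspec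
end

section
/- Let A, K ∈ ℝ^{n×n} and let D₀ ∈ ℝ^{N×N} be a matrix whose spectral radius is strictly less than 1. If A + (1−λ)·K is Schur stable for every λ ∈ ℂ with |λ| < 1, then the matrix I_N ⊗ A + (I_N − D₀) ⊗ K is Schur stable. -/
open Matrix
open scoped Kronecker

theorem stmt8
    (n N : ℕ)
    (A K : Matrix (Fin n) (Fin n) ℝ)
    (D₀ : Matrix (Fin N) (Fin N) ℝ)
    -- the spectral radius of D₀ is strictly less than 1
    (hD₀ : ∀ μ ∈ spectrum ℂ (D₀.map Complex.ofReal), ‖μ‖ < 1)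
    (hstab : ∀ l : ℂ, ‖l‖ < 1 →
      IsSchurStable (A.map Complex.ofReal + (1 - l) • K.map Complex.ofReal)) :
    IsSchurStable ((((1 : Matrix (Fin N) (Fin N) ℝ) ⊗ₖ A
      + ((1 : Matrix (Fin N) (Fin N) ℝ) - D₀) ⊗ₖ K)).map Complex.ofReal) := by
  set Aℂ := A.map Complex.ofReal with hAc
  set Kℂ := K.map Complex.ofReal with hKc
  set Dℂ := D₀.map Complex.ofReal with hDc
  intro μ hμ
  by_contra hμ1
  -- pass from matrix spectrum to eigenvalues of the linear map
  rw [← AlgEquiv.spectrum_eq (Matrix.toLinAlgEquiv'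
    (n := Fin N × Fin n) (R := ℂ))] at hμ
  have hev := Module.End.hasEigenvalue_iff_mem_spectrum.mpr hμ
  obtain ⟨v, hv⟩ := hev.exists_hasEigenvector
  -- fold the eigenvector into an n × N matrix
  set V : Matrix (Fin n) (Fin N) ℂ := Matrix.of (fun a i => v (i, a)) with hV
  set Bℂ : Matrix (Fin n) (Fin n) ℂ := μ • 1 - Aℂ - Kℂ with hB
  -- the key matrix equation
  have hkey : Bℂ * V + Kℂ * (V * Dℂᵀ) = 0 := by
    ext a i
    have h1 := congrFun hv.apply_eq_smul (i, a)
    simp only [Matrix.toLinAlgEquiv'_apply, Matrix.mulVec, dotProduct,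
      Matrix.map_apply, Matrix.add_apply, Matrix.kroneckerMap_apply, Matrix.sub_apply,
      Matrix.one_apply, Pi.smul_apply, smul_eq_mul, Fintype.sum_prod_type,
      apply_ite Complex.ofReal, Complex.ofReal_one, Complex.ofReal_zero,
      Complex.ofReal_add, Complex.ofReal_sub, Complex.ofReal_mul] at h1
    simp only [Matrix.add_apply, Matrix.mul_apply, Matrix.zero_apply, hB, hV,
      Matrix.sub_apply, Matrix.smul_apply, Matrix.one_apply, Matrix.transpose_apply,
      Matrix.of_apply, smul_eq_mul, hAc, hKc, hDc, Matrix.map_apply]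
    have hswap : ∑ b : Fin n, (K a b : ℂ) * ∑ j : Fin N, v (j, b) * (D₀ i j : ℂ)
        = ∑ j : Fin N, ∑ b : Fin n, (D₀ i j : ℂ) * (K a b : ℂ) * v (j, b) := by
      simp_rw [Finset.mul_sum]
      rw [Finset.sum_comm]
      exact Finset.sum_congr rfl fun j _ => Finset.sum_congr rfl fun b _ => by ring
    have collapse : ∀ g : Fin N → Fin n → ℂ,
        (∑ x : Fin N, ∑ b : Fin n, if i = x then g x b else 0) = ∑ b : Fin n, g i b := by
      intro g; rw [Finset.sum_comm]; simp
    simp only [ite_mul, mul_ite, mul_one, mul_zero, one_mul, zero_mul, add_mul, sub_mul,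
      Finset.sum_add_distrib, Finset.sum_sub_distrib, Finset.sum_ite_eq, Finset.mem_univ,
      if_true, collapse] at h1 ⊢
    rw [hswap]
    linear_combination -h1
  -- the vector form of the key equation
  have hmv : ∀ x : Fin N → ℂ,
      Bℂ.mulVec (V.mulVec x) + Kℂ.mulVec (V.mulVec (Dℂᵀ.mulVec x)) = 0 := by
    intro x
    have h2 := congrArg (fun M => M.mulVec x) hkey
    simpa [Matrix.add_mulVec, Matrix.mulVec_mulVec] using h2
  set g : Module.End ℂ (Fin N → ℂ) := Matrix.toLinAlgEquiv' Dℂᵀ with hg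
  -- kernel of powers of (g - lam • 1) is killed by V
  have key : ∀ lam : ℂ, ∀ k : ℕ, ∀ x : Fin N → ℂ,
      ((g - lam • 1) ^ k) x = 0 → V.mulVec x = 0 := by
    intro lam
    by_cases hlam : lam ∈ spectrum ℂ Dℂ
    · -- lam is an eigenvalue of D₀, so μ•1 - (A + (1-lam)K) is invertible
      have habs := hD₀ lam hlam
      have hs := hstab lam habs
      have hnot : μ ∉ spectrum ℂ (Aℂ + (1 - lam) • Kℂ) := fun h => hμ1 (hs μ h)
      have hunit : IsUnit (μ • (1 : Matrix (Fin n) (Fin n) ℂ) - (Aℂ + (1 - lam) • Kℂ)) := by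
        rw [spectrum.notMem_iff] at hnot
        simpa [Algebra.algebraMap_eq_smul_one] using hnot
      obtain ⟨Cinv, hCinv⟩ := hunit.exists_left_inv
      intro k
      induction k with
      | zero =>
        intro x hx
        simp only [pow_zero, Module.End.one_apply] at hx
        simp [hx]
      | succ k ih =>
        intro x hx
        rw [pow_succ] at hx
        have hy := ih ((g - lam • 1) x) (by simpa using hx)
        have hgx : (g - lam • (1 : Module.End ℂ (Fin N → ℂ))) x = Dℂᵀ.mulVec x - lam • x := by
          simp [hg, Matrix.toLinAlgEquiv'_apply]
        rw [hgx] at hy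
        rw [Matrix.mulVec_sub, Matrix.mulVec_smul] at hy
        have h2 := sub_eq_zero.mp hy
        have h3 := hmv x
        rw [h2] at h3
        have hC : (μ • (1 : Matrix (Fin n) (Fin n) ℂ) - (Aℂ + (1 - lam) • Kℂ))
            = Bℂ + lam • Kℂ := by
          rw [hB]; module
        have h4 : (μ • (1 : Matrix (Fin n) (Fin n) ℂ) - (Aℂ + (1 - lam) • Kℂ)) *ᵥ (V *ᵥ x)
            = 0 := by
          rw [hC, Matrix.add_mulVec, Matrix.smul_mulVec]
          rw [Matrix.mulVec_smul] at h3
          exact h3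
        have h5 : (Cinv * (μ • (1 : Matrix (Fin n) (Fin n) ℂ) - (Aℂ + (1 - lam) • Kℂ)))
            *ᵥ (V *ᵥ x) = 0 := by
          rw [← Matrix.mulVec_mulVec, h4, Matrix.mulVec_zero]
        rw [hCinv, Matrix.one_mulVec] at h5
        exact h5
    · -- lam is not an eigenvalue of D₀, so (g - lam • 1) is invertible
      have hu : IsUnit (lam • (1 : Matrix (Fin N) (Fin N) ℂ) - Dℂ) := by
        rw [spectrum.notMem_iff] at hlam
        simpa [Algebra.algebraMap_eq_smul_one] using hlam
      have hu2 : IsUnit (Dℂᵀ - lam • 1) := by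
        rw [Matrix.isUnit_iff_isUnit_det]
        have ht : (Dℂᵀ - lam • (1 : Matrix (Fin N) (Fin N) ℂ)) = (Dℂ - lam • 1)ᵀ := by
          simp [Matrix.transpose_sub, Matrix.transpose_smul, Matrix.transpose_one]
        have hneg : (Dℂ - lam • (1 : Matrix (Fin N) (Fin N) ℂ)) = -(lam • 1 - Dℂ) := by
          simp
        rw [ht, Matrix.det_transpose, hneg, Matrix.det_neg]
        have hdet := (Matrix.isUnit_iff_isUnit_det _).mp hu
        simp only [isUnit_iff_ne_zero] at hdet ⊢
        exact mul_ne_zero (pow_ne_zero _ (by norm_num)) hdet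
      have hu3 : IsUnit (g - lam • 1) := by
        have heq : g - lam • 1
            = Matrix.toLinAlgEquiv' (Dℂᵀ - lam • 1) := by
          simp [hg, map_sub]
        rw [heq]
        exact hu2.map (Matrix.toLinAlgEquiv' (n := Fin N) (R := ℂ))
      intro k x hx
      obtain ⟨w, hw⟩ := (hu3.pow k).exists_left_inv
      have hx0 : x = 0 := by
        calc x = (w * ((g - lam • 1) ^ k)) x := by rw [hw]; rfl
        _ = w (((g - lam • 1) ^ k) x) := rfl
        _ = 0 := by rw [hx]; simp
      simp [hx0]
  -- V kills every generalized eigenvector, hence everything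
  have hall : ∀ x : Fin N → ℂ, V *ᵥ x = 0 := by
    intro x
    have htop := Module.End.iSup_maxGenEigenspace_eq_top g
    have hle : (⨆ lam : ℂ, g.maxGenEigenspace lam) ≤ LinearMap.ker V.mulVecLin := by
      refine iSup_le fun lam y hy => ?_
      obtain ⟨k, hk⟩ := (Module.End.mem_maxGenEigenspace g lam y).mp hy
      exact LinearMap.mem_ker.mpr (key lam k y hk)
    have hx : x ∈ (⊤ : Submodule ℂ (Fin N → ℂ)) := trivial
    rw [← htop] at hx
    simpa using hle hx
  have hv0 : v = 0 := by
    funext p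
    obtain ⟨i, a⟩ := p
    have h6 := congrFun (hall (Pi.single i 1)) a
    simpa [Matrix.mulVec, dotProduct, Pi.single_apply, mul_ite, mul_one, mul_zero,
      Finset.sum_ite_eq, Finset.sum_ite_eq', hV] using h6
  exact hv.2 hv0
end
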